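/- Let F be a prime filter on a De Morgan lattice L, and define h_F : L → Bool × Bool by h_F(x) = (decide (x ∈ F), decide (¬x ∉ F)). Then h_F is a homomorphism of De Morgan lattices from L to DM₁ and F = h_F⁻¹(D₁). Moreover, if F is complete then (h_F x).2 = true implies (h_F x).1 = true for all x; if F is consistent then (h_F x).1 = true implies (h_F x).2 = true for all x; and if F is classical then (h_F x).1 = (h_F x).2 for all x. -/

import Mathlib

/-- A De Morgan lattice: a distributive lattice with an antitone involution. -/
class DeMorgan (L : Type*) extends DistribLattice L where
  dneg : L → L
  dneg_dneg : ∀ x : L, dneg (dneg x) = x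
  dneg_sup : ∀ x y : L, dneg (x ⊔ y) = dneg x ⊓ dneg y

prefix:max "∼" => DeMorgan.dneg

section Defs

variable {α : Type*}

/-- An upward closed subset of a lattice. -/
def IsUpset [Lattice α] (F : Set α) : Prop :=
  ∀ ⦃x y : α⦄, x ∈ F → x ≤ y → y ∈ F

/-- A lattice filter: an upset closed under binary meets. -/
def IsLatFilter [Lattice α] (F : Set α) : Prop :=
  IsUpset F ∧ ∀ x y : α, x ∈ F → y ∈ F → x ⊓ y ∈ F

/-- An `n`-filter: an upset such that for every nonempty finite `Y`, if the meet of
every nonempty subset of `Y` of size at most `n` lies in `F`, then so does the meet of `Y`. -/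
def IsNFilter [Lattice α] (n : ℕ) (F : Set α) : Prop :=
  IsUpset F ∧ ∀ (Y : Finset α) (hY : Y.Nonempty),
    (∀ (X : Finset α) (hX : X.Nonempty), X ⊆ Y → X.card ≤ n → X.inf' hX id ∈ F) →
    Y.inf' hY id ∈ F

/-- A prime upset: `x ⊔ y ∈ F` implies `x ∈ F` or `y ∈ F`. -/
def IsPrimeUpset [Lattice α] (F : Set α) : Prop :=
  ∀ x y : α, x ⊔ y ∈ F → x ∈ F ∨ y ∈ F

/-- A downward closed subset of a lattice. -/
def IsDownset [Lattice α] (I : Set α) : Prop :=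
  ∀ ⦃x y : α⦄, x ∈ I → y ≤ x → y ∈ I

/-- A lattice ideal: a downset closed under binary joins. -/
def IsIdeal [Lattice α] (I : Set α) : Prop :=
  IsDownset I ∧ ∀ x y : α, x ∈ I → y ∈ I → x ⊔ y ∈ I

/-- An `n`-ideal: the order dual notion of an `n`-filter. -/
def IsNIdeal [Lattice α] (n : ℕ) (I : Set α) : Prop :=
  IsDownset I ∧ ∀ (Y : Finset α) (hY : Y.Nonempty),
    (∀ (X : Finset α) (hX : X.Nonempty), X ⊆ Y → X.card ≤ n → X.sup' hX id ∈ I) →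
    Y.sup' hY id ∈ I

variable {L : Type*} [DeMorgan L]

/-- Almost complete upset: `x ∈ F` implies `x ⊓ (y ⊔ ∼y) ∈ F`. -/
def AlmostComplete (F : Set L) : Prop := ∀ x ∈ F, ∀ y : L, x ⊓ (y ⊔ ∼y) ∈ F

/-- Complete upset: almost complete and nonempty. -/
def IsCompleteUpset (F : Set L) : Prop := AlmostComplete F ∧ F.Nonempty

/-- Almost consistent upset: `(x ⊓ ∼x) ⊔ y ∈ F` implies `y ∈ F`. -/
def AlmostConsistent (F : Set L) : Prop := ∀ x y : L, (x ⊓ ∼x) ⊔ y ∈ F → y ∈ F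

/-- Consistent upset: almost consistent and not total. -/
def IsConsistentUpset (F : Set L) : Prop := AlmostConsistent F ∧ F ≠ Set.univ

/-- Classical upset: complete and consistent. -/
def IsClassicalUpset (F : Set L) : Prop := IsCompleteUpset F ∧ IsConsistentUpset F

/-- Kalman upset. -/
def IsKalmanUpset (F : Set L) : Prop :=
  ∀ x y z u : L, ((x ⊓ ∼x) ⊓ z) ⊔ u ∈ F → ((y ⊔ ∼y) ⊓ z) ⊔ u ∈ F

/-- A homomorphism of De Morgan lattices. -/
def IsDMHom {L M : Type*} [DeMorgan L] [DeMorgan M] (h : L → M) : Prop :=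
  (∀ x y : L, h (x ⊓ y) = h x ⊓ h y) ∧ (∀ x y : L, h (x ⊔ y) = h x ⊔ h y) ∧
    ∀ x : L, h (∼x) = ∼(h x)

/-- The filter generated by all elements of the form `x ⊔ ∼x`. -/
def Fcomp (L : Type*) [DeMorgan L] : Set L :=
  {a | ∃ (s : Finset L) (hs : s.Nonempty), s.inf' hs (fun x => x ⊔ ∼x) ≤ a}

/-- The `n`-filter generated by a set. -/
def nFilterGen (n : ℕ) (U : Set L) : Set L :=
  ⋂₀ {F : Set L | IsNFilter n F ∧ U ⊆ F}

/-- `Comp U`. -/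
def CompCl (U : Set L) : Set L := {x | ∃ a ∈ U, ∃ f ∈ Fcomp L, a ⊓ f ≤ x}

/-- `Cons U`. -/
def ConsCl (U : Set L) : Set L := {x | ∃ f ∈ Fcomp L, ∼f ⊔ x ∈ U}

/-- A congruence of De Morgan lattices, as a binary relation. -/
def IsCongruence (θ : L → L → Prop) : Prop :=
  Equivalence θ ∧
  (∀ a b c d : L, θ a b → θ c d → θ (a ⊓ c) (b ⊓ d)) ∧
  (∀ a b c d : L, θ a b → θ c d → θ (a ⊔ c) (b ⊔ d)) ∧
  ∀ a b : L, θ a b → θ (∼a) (∼b)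

end Defs

/-- The four-element De Morgan lattice `DM₁` on `Bool × Bool`. -/
instance : DeMorgan (Bool × Bool) :=
  { (inferInstance : DistribLattice (Bool × Bool)) with
    dneg := fun p => (!p.2, !p.1)
    dneg_dneg := by decide
    dneg_sup := by decide }

/-- Powers of `DM₁`, with componentwise operations. -/
instance {ι : Type*} : DeMorgan (ι → Bool × Bool) :=
  { (inferInstance : DistribLattice (ι → Bool × Bool)) with
    dneg := fun f i => ∼(f i)
    dneg_dneg := fun f => funext fun i => DeMorgan.dneg_dneg (f i)
    dneg_sup := fun f g => funext fun i => DeMorgan.dneg_sup (f i) (g i) }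

/-! A prime filter makes membership commute with both meets and joins; since `∼` swaps meets
and joins, so does the second coordinate `∼x ∉ F`, which gives the homomorphism. A complete prime
upset contains `x ⊔ ∼x` and hence `x` or `∼x`; a consistent filter cannot contain both, as then it
would contain `x ⊓ ∼x` and therefore everything. -/

namespace DeMorgan

variable {L : Type*} [DeMorgan L]

theorem dneg_inf (x y : L) : ∼(x ⊓ y) = ∼x ⊔ ∼y := by
  simpa only [dneg_dneg] using (congrArg dneg (dneg_sup (∼x) (∼y))).symm

end DeMorgan

section Lattice

variable {α : Type*} [Lattice α] {F : Set α}

theorem IsLatFilter.inf_mem_iff (hF : IsLatFilter F) {x y : α} :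
    x ⊓ y ∈ F ↔ x ∈ F ∧ y ∈ F :=
  ⟨fun h => ⟨hF.1 h inf_le_left, hF.1 h inf_le_right⟩, fun h => hF.2 x y h.1 h.2⟩

theorem IsPrimeUpset.sup_mem_iff (hP : IsPrimeUpset F) (hU : IsUpset F) {x y : α} :
    x ⊔ y ∈ F ↔ x ∈ F ∨ y ∈ F :=
  ⟨hP x y, fun h => h.elim (hU · le_sup_left) (hU · le_sup_right)⟩

end Lattice

section Filters

variable {L : Type*} [DeMorgan L] {F : Set L}

theorem IsCompleteUpset.mem_or_dneg_mem (hC : IsCompleteUpset F) (hU : IsUpset F)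
    (hP : IsPrimeUpset F) (x : L) : x ∈ F ∨ ∼x ∈ F := by
  obtain ⟨hAC, a, ha⟩ := hC
  exact hP x (∼x) (hU (hAC a ha x) inf_le_right)

theorem IsConsistentUpset.dneg_not_mem (hC : IsConsistentUpset F) (hF : IsLatFilter F)
    {x : L} (hx : x ∈ F) : ∼x ∉ F := by
  intro hnx
  have hxnx : x ⊓ ∼x ∈ F := hF.2 x (∼x) hx hnx
  exact hC.2 (Set.eq_univ_of_forall fun y => hC.1 x y (hF.1 hxnx le_sup_left))

@[simp]
theorem dneg_bool_prod (a b : Bool) : ∼(a, b) = (!b, !a) := rfl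

variable (F) [DecidablePred (· ∈ F)]

def toDM₁ (x : L) : Bool × Bool := (decide (x ∈ F), decide (∼x ∉ F))

variable {F}

theorem isDMHom_toDM₁ (hF : IsLatFilter F) (hP : IsPrimeUpset F) : IsDMHom (toDM₁ F) := by
  have hU := hF.1
  refine ⟨fun x y => ?_, fun x y => ?_, fun x => ?_⟩
  · simp [toDM₁, DeMorgan.dneg_inf, hF.inf_mem_iff, hP.sup_mem_iff hU]
  · simp [toDM₁, DeMorgan.dneg_sup, hF.inf_mem_iff, hP.sup_mem_iff hU]
  · simp [toDM₁, DeMorgan.dneg_dneg]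

end Filters

theorem statement0 {L : Type*} [DeMorgan L] (F : Set L)
    [DecidablePred (· ∈ F)]
    (hFil : IsLatFilter F) (hPrime : IsPrimeUpset F)
    (h : L → Bool × Bool)
    (hdef : ∀ x : L, h x = (decide (x ∈ F), decide (∼x ∉ F))) :
    IsDMHom h ∧ F = h ⁻¹' {p : Bool × Bool | p.1 = true} ∧
    (IsCompleteUpset F → ∀ x : L, (h x).2 = true → (h x).1 = true) ∧
    (IsConsistentUpset F → ∀ x : L, (h x).1 = true → (h x).2 = true) ∧
    (IsClassicalUpset F → ∀ x : L, (h x).1 = (h x).2) := by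
  obtain rfl : h = toDM₁ F := funext hdef
  have complete_le : IsCompleteUpset F → ∀ x, (toDM₁ F x).2 = true → (toDM₁ F x).1 = true :=
    fun hC x => by simpa [toDM₁] using (hC.mem_or_dneg_mem hFil.1 hPrime x).resolve_right
  have consistent_le : IsConsistentUpset F → ∀ x, (toDM₁ F x).1 = true → (toDM₁ F x).2 = true :=
    fun hC x => by simpa [toDM₁] using hC.dneg_not_mem hFil
  exact ⟨isDMHom_toDM₁ hFil hPrime, by ext; simp [toDM₁], complete_le, consistent_le,
    fun hC x => Bool.eq_iff_iff.2 ⟨consistent_le hC.2 x, complete_le hC.1 x⟩⟩
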